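/- arXiv:1903.04968 — 7 statements merged into one kernel-verified Lean document; each statement's English description precedes it below -/
import Mathlib

section
/- If an n-uniform hypergraph H is not 2-colorable (i.e., for every 2-coloring of its vertices some edge is monochromatic), then H contains at least one simple pair of edges, i.e., two edges X, Y with |X ∩ Y| = 1. -/
open Classical

/-- `π` separates the simple pair `(X, Y)`: with `X ∩ Y = {y}`, all of `X \ {y}`
precedes `y` and `y` precedes all of `Y \ {y}` in the ordering `π`. -/
def Separates {V : Type*} [Fintype V] [DecidableEq V] (π : V ≃ Fin (Fintype.card V))
    (X Y : Finset V) : Prop :=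
  ∃ y, X ∩ Y = {y} ∧ (∀ x ∈ X, x ≠ y → π x < π y) ∧ (∀ z ∈ Y, z ≠ y → π y < π z)

/-- A hypergraph with edge set `E` is 2-colorable if some 2-coloring of the vertices
leaves no edge monochromatic. -/
def TwoColorable {V : Type*} (E : Finset (Finset V)) : Prop :=
  ∃ c : V → Bool, ∀ X ∈ E, (∃ v ∈ X, c v = true) ∧ (∃ v ∈ X, c v = false)

/-- `m₂(H)`: the number of ordered simple pairs of edges. -/
def m2 {V : Type*} [DecidableEq V] (E : Finset (Finset V)) : ℕ :=
  ((E ×ˢ E).filter fun p => (p.1 ∩ p.2).card = 1).card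

/-- Greedy coloring along the ordering `π`: vertex with index `i` gets `true` unless
that would complete a monochromatic-`true` edge whose `π`-maximum is `i`. -/
noncomputable def greedy {V : Type*} [Fintype V]
    (E : Finset (Finset V)) (π : V ≃ Fin (Fintype.card V)) (i : ℕ) : Bool :=
  ! decide (∃ X ∈ E, ∃ h : i < Fintype.card V, π.symm ⟨i, h⟩ ∈ X ∧
      (∀ x ∈ X, (π x : ℕ) ≤ i) ∧
      ∀ j : Fin i, π.symm ⟨j.1, Nat.lt_trans j.2 h⟩ ∈ X → greedy E π j.1 = true)
  termination_by i
  decreasing_by all_goals exact Fin.is_lt _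

lemma greedy_spec {V : Type*} [Fintype V]
    (E : Finset (Finset V)) (π : V ≃ Fin (Fintype.card V)) (i : ℕ) :
    greedy E π i = false ↔ (∃ X ∈ E, ∃ h : i < Fintype.card V, π.symm ⟨i, h⟩ ∈ X ∧
      (∀ x ∈ X, (π x : ℕ) ≤ i) ∧
      ∀ j : Fin i, π.symm ⟨j.1, Nat.lt_trans j.2 h⟩ ∈ X → greedy E π j.1 = true) := by
  rw [greedy]
  simp

theorem stmt_0 {V : Type*} [Fintype V] [DecidableEq V] (n : ℕ) (hn : 1 ≤ n)
    (E : Finset (Finset V)) (hunif : ∀ X ∈ E, X.card = n)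
    (hnc : ¬ TwoColorable E) :
    ∃ X ∈ E, ∃ Y ∈ E, (X ∩ Y).card = 1 := by
  set π := Fintype.equivFin V with hπ
  set c : V → Bool := fun v => greedy E π (π v) with hc
  -- if `c v = false`, some edge has `v` as `π`-maximum with all other vertices `true`
  have keyA : ∀ v : V, c v = false → ∃ X ∈ E, v ∈ X ∧ (∀ x ∈ X, (π x : ℕ) ≤ (π v : ℕ)) ∧
      ∀ x ∈ X, x ≠ v → c x = true := by
    intro v hv
    rw [hc] at hv
    rw [greedy_spec] at hv
    obtain ⟨X, hXE, h, hvX, hmax, htrue⟩ := hv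
    have hsv : π.symm ⟨(π v : ℕ), h⟩ = v := by
      have : (⟨(π v : ℕ), h⟩ : Fin (Fintype.card V)) = π v := rfl
      rw [this, Equiv.symm_apply_apply]
    rw [hsv] at hvX
    refine ⟨X, hXE, hvX, hmax, fun x hx hxv => ?_⟩
    have hlt : (π x : ℕ) < (π v : ℕ) := by
      rcases lt_or_eq_of_le (hmax x hx) with h' | h'
      · exact h'
      · exact absurd (π.injective (Fin.val_injective h')) hxv
    have hj : π.symm ⟨((⟨(π x : ℕ), hlt⟩ : Fin (π v : ℕ)) : ℕ),
        Nat.lt_trans hlt h⟩ ∈ X := by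
      have : (⟨(π x : ℕ), Nat.lt_trans hlt h⟩ : Fin (Fintype.card V)) = π x := rfl
      simpa [this, Equiv.symm_apply_apply] using hx
    simpa using htrue ⟨(π x : ℕ), hlt⟩ hj
  -- conversely, if `y` is the `π`-maximum of an edge all of whose other vertices are
  -- `true`, then `c y = false`
  have keyB : ∀ Y ∈ E, ∀ y ∈ Y, (∀ x ∈ Y, (π x : ℕ) ≤ (π y : ℕ)) →
      (∀ x ∈ Y, x ≠ y → c x = true) → c y = false := by
    intro Y hYE y hyY hmax htrue
    rw [hc, greedy_spec]
    refine ⟨Y, hYE, (π y).isLt, ?_, hmax, fun j hj => ?_⟩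
    · have : (⟨((π y : ℕ)), (π y).isLt⟩ : Fin (Fintype.card V)) = π y := rfl
      rw [this, Equiv.symm_apply_apply]; exact hyY
    · set x := π.symm ⟨j.1, Nat.lt_trans j.2 (π y).isLt⟩ with hx
      have hπx : (π x : ℕ) = j.1 := by rw [hx, Equiv.apply_symm_apply]
      have hxy : x ≠ y := by
        intro h
        rw [h] at hπx
        have := j.2
        omega
      have := htrue x hj hxy
      rw [hc] at this
      simpa [hπx] using this
  -- the coloring `c` must have a monochromatic edge
  rw [TwoColorable] at hnc
  push_neg at hnc
  obtain ⟨Y, hYE, hmono⟩ := hnc c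
  have hYne : Y.Nonempty := by
    rw [← Finset.card_pos, hunif Y hYE]; omega
  obtain ⟨y, hyY, hymax⟩ := Finset.exists_max_image Y (fun v => (π v : ℕ)) hYne
  by_cases hall : ∃ v ∈ Y, c v = true
  case neg =>
    push_neg at hall
    -- no vertex of Y is true: Y is all false
    have hyf : c y = false := by
      have := hall y hyY
      revert this; cases c y <;> simp
    obtain ⟨X, hXE, hyX, hXmax, hXtrue⟩ := keyA y hyf
    refine ⟨X, hXE, Y, hYE, ?_⟩
    have : X ∩ Y = {y} := by
      apply Finset.eq_singleton_iff_unique_mem.mpr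
      refine ⟨Finset.mem_inter.mpr ⟨hyX, hyY⟩, fun z hz => ?_⟩
      by_contra hzy
      rw [Finset.mem_inter] at hz
      have ht : c z = true := hXtrue z hz.1 hzy
      have hf : c z ≠ true := hall z hz.2
      exact hf ht
    rw [this, Finset.card_singleton]
  case pos =>
    -- no vertex of Y is false: Y is all true, contradicting keyB at the maximum of Y
    exfalso
    have htrue : ∀ x ∈ Y, c x = true := by
      intro x hx
      have := hmono hall x hx
      revert this; cases c x <;> simp
    have := keyB Y hYE y hyY hymax (fun x hx _ => htrue x hx)
    rw [htrue y hyY] at this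
    exact Bool.noConfusion this
end

section
/- If an n-uniform hypergraph H is not 2-colorable, then the number of ordered simple pairs of edges of H, m₂(H), satisfies m₂(H) ≥ n·C(2n−1, n). -/
open Classical

/-! Order the vertices by a bijection `π` and colour greedily: a vertex is red exactly when it is
the last vertex of an edge whose other vertices are all blue. An all-blue edge is impossible (its
last vertex would be red), so as `H` is not 2-colourable some edge `Y` is all red. Its first vertex
`y` is red because of an edge `X` that ends at `y` and is blue apart from `y`; hence `X ∩ Y = {y}`
and `π` puts `X \ {y}` before `y` before `Y \ {y}`. So every ordering separates some simple pair.
A fixed simple pair of `n`-edges spans `2n - 1` vertices and is separated by a fraction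
`((n - 1)!)² / (2n - 1)!` of the orderings, whence
`m₂(H) ≥ (2n - 1)! / ((n - 1)!)² = n·C(2n - 1, n)`. -/

open Finset
open scoped Nat

theorem exists_monochromatic_of_not_twoColorable {V : Type*} {E : Finset (Finset V)}
    (hnc : ¬ TwoColorable E) (P : V → Prop) :
    ∃ X ∈ E, (∀ v ∈ X, P v) ∨ ∀ v ∈ X, ¬ P v := by
  by_contra! h
  exact hnc ⟨fun v => decide (P v), fun X hX => by simpa using (h X hX).symm⟩

section Greedy

variable {V : Type*} [Fintype V] (E : Finset (Finset V)) (π : V ≃ Fin (Fintype.card V))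

-- `∃ _ : π x < π v` rather than `∧` keeps the decrease in scope of the recursive call.
def GreedyRed (v : V) : Prop :=
  ∃ X ∈ E, v ∈ X ∧ ∀ x ∈ X, x ≠ v → ∃ _ : π x < π v, ¬ GreedyRed x
termination_by π v

theorem greedyRed_iff {v : V} : GreedyRed E π v ↔
    ∃ X ∈ E, v ∈ X ∧ ∀ x ∈ X, x ≠ v → π x < π v ∧ ¬ GreedyRed E π x := by
  rw [GreedyRed]; simp only [exists_prop]

theorem exists_separates [DecidableEq V] (hne : ∀ X ∈ E, X.Nonempty) (hnc : ¬ TwoColorable E) :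
    ∃ X ∈ E, ∃ Y ∈ E, Separates π X Y := by
  obtain ⟨X₀, hX₀, hred | hblue⟩ := exists_monochromatic_of_not_twoColorable hnc (GreedyRed E π)
  · obtain ⟨y, hyX₀, hmin⟩ := X₀.exists_min_image π (hne X₀ hX₀)
    obtain ⟨X, hX, hyX, hbefore⟩ := (greedyRed_iff E π).1 (hred y hyX₀)
    have hinter : X ∩ X₀ = {y} := by
      ext v
      simp only [mem_inter, mem_singleton]
      refine ⟨fun ⟨hvX, hvX₀⟩ => ?_, fun hv => hv ▸ ⟨hyX, hyX₀⟩⟩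
      by_contra hvy
      exact (hbefore v hvX hvy).2 (hred v hvX₀)
    refine ⟨X, hX, X₀, hX₀, y, hinter, fun x hx hxy => (hbefore x hx hxy).1,
      fun z hz hzy => (hmin z hz).lt_of_ne fun h => hzy (π.injective h).symm⟩
  · obtain ⟨v, hvX₀, hmax⟩ := X₀.exists_max_image π (hne X₀ hX₀)
    refine absurd ((greedyRed_iff E π).2 ⟨X₀, hX₀, hvX₀, fun x hx hxv => ⟨?_, hblue x hx⟩⟩)
      (hblue v hvX₀)
    exact (hmax x hx).lt_of_ne fun h => hxv (π.injective h)

end Greedy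

theorem Separates.card_inter {V : Type*} [Fintype V] [DecidableEq V]
    {π : V ≃ Fin (Fintype.card V)} {X Y : Finset V} (h : Separates π X Y) :
    (X ∩ Y).card = 1 :=
  let ⟨_, hXY, _⟩ := h
  hXY ▸ card_singleton _

theorem card_equiv_comp_eq {α β ι : Type*} [Fintype α] [DecidableEq α] [Fintype β]
    [DecidableEq β] [Fintype ι] [DecidableEq ι] {f : α → ι} {g : β → ι}
    (h : ∀ i, Fintype.card {a // f a = i} = Fintype.card {b // g b = i}) :
    Fintype.card {τ : α ≃ β // g ∘ τ = f} = ∏ i, (Fintype.card {a // f a = i})! := by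
  obtain ⟨τ₀, rfl⟩ : ∃ τ₀ : α ≃ β, g ∘ τ₀ = f :=
    ⟨(Equiv.sigmaFiberEquiv f).symm.trans ((Equiv.sigmaCongrRight fun i =>
      Fintype.equivOfCardEq (h i)).trans (Equiv.sigmaFiberEquiv g)),
      funext fun a => (Fintype.equivOfCardEq (h (f a)) ⟨a, rfl⟩).2⟩
  rw [← DomMulAct.stabilizer_card]
  refine Fintype.card_congr ((Equiv.equivCongr (Equiv.refl α) τ₀.symm).subtypeEquiv fun τ => ?_)
  have : g ∘ τ₀ ∘ (τ.trans τ₀.symm) = g ∘ τ := by ext; simp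
  change g ∘ τ = g ∘ τ₀ ↔ g ∘ τ₀ ∘ (τ.trans τ₀.symm) = g ∘ τ₀
  rw [this]

theorem val_apply_eq_card_of_forall_lt_iff {α : Type*} {m : ℕ} (τ : α ≃ Fin m) {A : Finset α}
    {y : α} (h : ∀ a, τ a < τ y ↔ a ∈ A) : (τ y : ℕ) = A.card := by
  have hIio : Iio (τ y) = A.map τ.toEmbedding := by
    ext i
    obtain ⟨a, rfl⟩ := τ.surjective i
    simp [h]
  rw [← Fin.card_Iio, hIio, card_map]

section Trisect

variable {γ : Type*} [DecidableEq γ] (s : Finset γ) (c : γ)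

def trisect (x : γ) : Fin 3 := if x ∈ s then 0 else if x = c then 1 else 2

variable {s c}

theorem trisect_eq_zero {x : γ} : trisect s c x = 0 ↔ x ∈ s := by
  unfold trisect; split_ifs <;> simp_all

theorem trisect_eq_one (hc : c ∉ s) {x : γ} : trisect s c x = 1 ↔ x = c := by
  unfold trisect; split_ifs <;> grind

theorem trisect_eq_two {x : γ} : trisect s c x = 2 ↔ x ∉ s ∧ x ≠ c := by
  unfold trisect; split_ifs <;> simp_all

theorem card_trisect_fiber [Fintype γ] (hc : c ∉ s) (i : Fin 3) :
    Fintype.card {x // trisect s c x = i} = ![s.card, 1, Fintype.card γ - s.card - 1] i := by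
  fin_cases i
  · simp [trisect_eq_zero]
  · simp [trisect_eq_one hc]
  · change Fintype.card {x // trisect s c x = 2} = Fintype.card γ - #s - 1
    have hfilter : ({x | x ∉ s ∧ x ≠ c} : Finset γ) = (insert c s)ᶜ := by
      ext x; simp [and_comm]
    rw [Fintype.card_congr (Equiv.subtypeEquivRight fun x => trisect_eq_two),
      Fintype.card_subtype, hfilter, card_compl, card_insert_of_notMem hc, Nat.sub_sub,
      Nat.add_comm]

end Trisect

theorem before_after_iff_trisect_comp {α : Type*} [DecidableEq α] {m : ℕ} {A : Finset α}
    {y : α} (hy : y ∉ A) (hAm : A.card < m) (τ : α ≃ Fin m) :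
    ((∀ a ∈ A, τ a < τ y) ∧ ∀ b ∉ A, b ≠ y → τ y < τ b) ↔
      trisect (Iio ⟨A.card, hAm⟩) ⟨A.card, hAm⟩ ∘ τ = trisect A y := by
  set p : Fin m := ⟨A.card, hAm⟩
  have hp : p ∉ Iio p := by simp
  constructor
  · rintro ⟨hA, hB⟩
    have hlt : ∀ a, τ a < τ y ↔ a ∈ A := by
      refine fun a => ⟨fun h => by_contra fun ha => ?_, hA a⟩
      rcases eq_or_ne a y with rfl | hay
      · exact h.false
      · exact (hB a ha hay).asymm h
    have hτy : τ y = p := Fin.ext (val_apply_eq_card_of_forall_lt_iff τ hlt)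
    funext a
    rw [Function.comp_apply]
    by_cases ha : a ∈ A
    · rw [trisect_eq_zero.2 ha, trisect_eq_zero.2 (mem_Iio.2 (hτy ▸ hA a ha))]
    rcases eq_or_ne a y with rfl | hay
    · rw [(trisect_eq_one hy).2 rfl, (trisect_eq_one hp).2 hτy]
    · have hpa : p < τ a := hτy ▸ hB a ha hay
      rw [trisect_eq_two.2 ⟨ha, hay⟩,
        trisect_eq_two.2 ⟨fun h => (mem_Iio.1 h).asymm hpa, hpa.ne'⟩]
  · intro h
    have hτy : τ y = p :=
      (trisect_eq_one hp).1 ((congrFun h y).trans ((trisect_eq_one hy).2 rfl))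
    refine ⟨fun a ha => ?_, fun b hb hby => ?_⟩
    · exact hτy ▸ mem_Iio.1 (trisect_eq_zero.1 ((congrFun h a).trans (trisect_eq_zero.2 ha)))
    · obtain ⟨hbp, hbp'⟩ :=
        trisect_eq_two.1 ((congrFun h b).trans (trisect_eq_two.2 ⟨hb, hby⟩))
      exact hτy ▸ lt_of_le_of_ne (not_lt.1 (mt mem_Iio.2 hbp)) (Ne.symm hbp')

theorem card_equiv_fin_before_after {α : Type*} [Fintype α] [DecidableEq α] {A : Finset α}
    {y : α} (hy : y ∉ A) :
    Fintype.card {τ : α ≃ Fin (Fintype.card α) //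
        (∀ a ∈ A, τ a < τ y) ∧ ∀ b ∉ A, b ≠ y → τ y < τ b} =
      A.card ! * (Fintype.card α - A.card - 1)! := by
  have hAm : A.card < Fintype.card α := card_lt_univ_of_notMem hy
  set p : Fin (Fintype.card α) := ⟨A.card, hAm⟩
  have hfiber : ∀ i, Fintype.card {a // trisect A y a = i} =
      Fintype.card {j // trisect (Iio p) p j = i} := by
    intro i
    rw [card_trisect_fiber hy, card_trisect_fiber (by simp), Fin.card_Iio, Fintype.card_fin]
  rw [Fintype.card_congr (Equiv.subtypeEquivRight (before_after_iff_trisect_comp hy hAm)),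
    card_equiv_comp_eq hfiber, Fin.prod_univ_three]
  simp [card_trisect_fiber hy]

theorem card_perm_before_after {α : Type*} [Fintype α] [LinearOrder α] {A : Finset α} {y : α}
    (hy : y ∉ A) :
    Fintype.card {ρ : Equiv.Perm α // (∀ a ∈ A, ρ a < ρ y) ∧ ∀ b ∉ A, b ≠ y → ρ y < ρ b} =
      A.card ! * (Fintype.card α - A.card - 1)! := by
  let o : α ≃o Fin (Fintype.card α) := (Fintype.orderIsoFinOfCardEq α rfl).symm
  rw [← card_equiv_fin_before_after hy]
  exact Fintype.card_congr
    ((Equiv.equivCongr (Equiv.refl α) o.toEquiv).subtypeEquiv fun ρ => by simp)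

theorem card_union_of_inter_eq_singleton {α : Type*} [DecidableEq α] {s t : Finset α} {a : α}
    (h : s ∩ t = {a}) : (s ∪ t).card = s.card + t.card - 1 := by
  rw [← card_union_add_card_inter s t, h, card_singleton, Nat.add_sub_cancel]

section Counting

variable {V : Type*} [Fintype V] [DecidableEq V] {n : ℕ} {X Y : Finset V} {y : V}

theorem separates_ofSubtype_trans_iff (hXY : X ∩ Y = {y}) (hy : y ∈ X ∪ Y)
    (π : V ≃ Fin (Fintype.card V)) (ρ : Equiv.Perm (X ∪ Y : Finset V)) :
    Separates ((Equiv.Perm.ofSubtype ρ).trans π) X Y ↔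
      (∀ a ∈ (X.erase y).subtype (· ∈ X ∪ Y), π (ρ a) < π (ρ ⟨y, hy⟩)) ∧
        ∀ b ∉ (X.erase y).subtype (· ∈ X ∪ Y), b ≠ ⟨y, hy⟩ → π (ρ ⟨y, hy⟩) < π (ρ b) := by
  have happ : ∀ v (hv : v ∈ X ∪ Y), (Equiv.Perm.ofSubtype ρ).trans π v = π (ρ ⟨v, hv⟩) :=
    fun v hv => congrArg π (Equiv.Perm.ofSubtype_apply_of_mem ρ hv)
  simp only [Separates, hXY, singleton_inj, exists_eq_left', mem_subtype, mem_erase]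
  constructor
  · rintro ⟨hbefore, hafter⟩
    refine ⟨fun a ⟨hay, haX⟩ => ?_, fun b hb hby => ?_⟩
    · rw [← happ a a.2, ← happ y hy]
      exact hbefore a haX hay
    · have hby : (b : V) ≠ y := fun h => hby (Subtype.ext h)
      have hbY : (b : V) ∈ Y := (mem_union.1 b.2).resolve_left fun hbX => hb ⟨hby, hbX⟩
      rw [← happ b b.2, ← happ y hy]
      exact hafter b hbY hby
  · rintro ⟨hbefore, hafter⟩
    refine ⟨fun x hx hxy => ?_, fun z hz hzy => ?_⟩
    · rw [happ x (mem_union_left _ hx), happ y hy]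
      exact hbefore ⟨x, _⟩ ⟨hxy, hx⟩
    · have hzX : z ∉ X := fun hzX => hzy (mem_singleton.1 (hXY ▸ mem_inter.2 ⟨hzX, hz⟩))
      rw [happ z (mem_union_right _ hz), happ y hy]
      exact hafter ⟨z, _⟩ (fun h => hzX h.2) fun h => hzy (congrArg Subtype.val h)

theorem card_perm_separates (hXY : X ∩ Y = {y}) (hX : X.card = n) (hY : Y.card = n)
    (π : V ≃ Fin (Fintype.card V)) :
    #{ρ : Equiv.Perm (X ∪ Y : Finset V) | Separates ((Equiv.Perm.ofSubtype ρ).trans π) X Y} =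
      (n - 1)! * (n - 1)! := by
  have hyX : y ∈ X := (mem_inter.1 (hXY ▸ mem_singleton_self y)).1
  have hy : y ∈ X ∪ Y := mem_union_left _ hyX
  have hyA : ⟨y, hy⟩ ∉ (X.erase y).subtype (· ∈ X ∪ Y) := by simp
  have hA : ((X.erase y).subtype (· ∈ X ∪ Y)).card = n - 1 := by
    rw [card_subtype, filter_true_of_mem fun v hv => mem_union_left _ (mem_of_mem_erase hv),
      card_erase_of_mem hyX, hX]
  have hS : Fintype.card (X ∪ Y : Finset V) = 2 * n - 1 := by
    rw [Fintype.card_coe, card_union_of_inter_eq_singleton hXY, hX, hY, two_mul]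
  -- ordering `X ∪ Y` by `π` turns separation into a condition on the relative order of `ρ`
  let _ : LinearOrder (X ∪ Y : Finset V) :=
    LinearOrder.lift' (fun s => π s) (π.injective.comp Subtype.val_injective)
  have hsep : ∀ ρ : Equiv.Perm (X ∪ Y : Finset V),
      Separates ((Equiv.Perm.ofSubtype ρ).trans π) X Y ↔
        (∀ a ∈ (X.erase y).subtype (· ∈ X ∪ Y), ρ a < ρ ⟨y, hy⟩) ∧
          ∀ b ∉ (X.erase y).subtype (· ∈ X ∪ Y), b ≠ ⟨y, hy⟩ → ρ ⟨y, hy⟩ < ρ b :=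
    separates_ofSubtype_trans_iff hXY hy π
  rw [← Fintype.card_subtype, Fintype.card_congr (Equiv.subtypeEquivRight hsep)]
  convert card_perm_before_after hyA using 3 <;> omega

theorem card_separates_mul (hXY : X ∩ Y = {y}) (hX : X.card = n) (hY : Y.card = n) :
    #{π : V ≃ Fin (Fintype.card V) | Separates π X Y} * (2 * n - 1)! =
      (Fintype.card V)! * ((n - 1)! * (n - 1)!) := by
  have hshift : ∀ ρ : Equiv.Perm (X ∪ Y : Finset V),
      #{π : V ≃ Fin (Fintype.card V) | Separates ((Equiv.Perm.ofSubtype ρ).trans π) X Y} =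
        #{π : V ≃ Fin (Fintype.card V) | Separates π X Y} := by
    intro ρ
    exact card_equiv (Equiv.equivCongr (Equiv.Perm.ofSubtype ρ).symm (Equiv.refl _))
      fun π => by simp only [mem_filter_univ]; rfl
  calc #{π : V ≃ Fin (Fintype.card V) | Separates π X Y} * (2 * n - 1)!
      = ∑ ρ : Equiv.Perm (X ∪ Y : Finset V),
          #{π : V ≃ Fin (Fintype.card V) | Separates ((Equiv.Perm.ofSubtype ρ).trans π) X Y} := by
        rw [sum_congr rfl fun ρ _ => hshift ρ, sum_const, Finset.card_univ, Fintype.card_perm,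
          Fintype.card_coe, card_union_of_inter_eq_singleton hXY, hX, hY, ← two_mul, smul_eq_mul,
          mul_comm]
    _ = ∑ π : V ≃ Fin (Fintype.card V),
          #{ρ : Equiv.Perm (X ∪ Y : Finset V) | Separates ((Equiv.Perm.ofSubtype ρ).trans π) X Y} :=
        sum_card_bipartiteAbove_eq_sum_card_bipartiteBelow _
    _ = (Fintype.card V)! * ((n - 1)! * (n - 1)!) := by
        rw [sum_congr rfl fun π _ => card_perm_separates hXY hX hY π, sum_const, Finset.card_univ,
          Fintype.card_equiv (Fintype.equivFin V), smul_eq_mul]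

end Counting

theorem mul_choose_mul_factorial_pred_sq {n : ℕ} (hn : 0 < n) :
    n * (2 * n - 1).choose n * ((n - 1)! * (n - 1)!) = (2 * n - 1)! := by
  have h := Nat.choose_mul_factorial_mul_factorial (show n ≤ 2 * n - 1 by omega)
  rw [show 2 * n - 1 - n = n - 1 by omega, ← Nat.mul_factorial_pred hn.ne'] at h
  rw [← h]
  ring

theorem factorial_mul_le_m2_mul {V : Type*} [Fintype V] [DecidableEq V] {n : ℕ}
    {E : Finset (Finset V)} (hunif : ∀ X ∈ E, X.card = n) (hne : ∀ X ∈ E, X.Nonempty)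
    (hnc : ¬ TwoColorable E) :
    (Fintype.card V)! * (2 * n - 1)! ≤ m2 E * ((Fintype.card V)! * ((n - 1)! * (n - 1)!)) := by
  set P := (E ×ˢ E).filter fun p => (p.1 ∩ p.2).card = 1
  have hcover : (Fintype.card V)! ≤
      ∑ p ∈ P, #{π : V ≃ Fin (Fintype.card V) | Separates π p.1 p.2} := by
    rw [← Fintype.card_equiv (Fintype.equivFin V), ← Finset.card_univ]
    refine (card_le_card fun π _ => ?_).trans card_biUnion_le
    obtain ⟨X, hX, Y, hY, hsep⟩ := exists_separates E π hne hnc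
    exact mem_biUnion.2 ⟨(X, Y), mem_filter.2 ⟨mem_product.2 ⟨hX, hY⟩, hsep.card_inter⟩,
      (mem_filter_univ _).2 hsep⟩
  have hcount : ∀ p ∈ P, #{π : V ≃ Fin (Fintype.card V) | Separates π p.1 p.2} * (2 * n - 1)! =
      (Fintype.card V)! * ((n - 1)! * (n - 1)!) := by
    intro p hp
    obtain ⟨hpE, hinter⟩ := mem_filter.1 hp
    obtain ⟨y, hy⟩ := card_eq_one.1 hinter
    exact card_separates_mul hy (hunif _ (mem_product.1 hpE).1) (hunif _ (mem_product.1 hpE).2)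
  calc (Fintype.card V)! * (2 * n - 1)!
      ≤ (∑ p ∈ P, #{π : V ≃ Fin (Fintype.card V) | Separates π p.1 p.2}) * (2 * n - 1)! :=
        Nat.mul_le_mul_right _ hcover
    _ = m2 E * ((Fintype.card V)! * ((n - 1)! * (n - 1)!)) := by
        rw [sum_mul, sum_congr rfl hcount, sum_const, smul_eq_mul, m2]

theorem stmt_1 {V : Type*} [Fintype V] [DecidableEq V] (n : ℕ)
    (E : Finset (Finset V)) (hunif : ∀ X ∈ E, X.card = n)
    (hnc : ¬ TwoColorable E) :
    n * Nat.choose (2 * n - 1) n ≤ m2 E := by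
  rcases Nat.eq_zero_or_pos n with rfl | hn
  · simp
  have hne : ∀ X ∈ E, X.Nonempty := fun X hX => card_pos.1 (hunif X hX ▸ hn)
  refine Nat.le_of_mul_le_mul_right ?_
    (by positivity : 0 < (Fintype.card V)! * ((n - 1)! * (n - 1)!))
  calc n * (2 * n - 1).choose n * ((Fintype.card V)! * ((n - 1)! * (n - 1)!))
      = (Fintype.card V)! * (2 * n - 1)! := by
        rw [← mul_choose_mul_factorial_pred_sq hn]; ring
    _ ≤ m2 E * ((Fintype.card V)! * ((n - 1)! * (n - 1)!)) :=
        factorial_mul_le_m2_mul hunif hne hnc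
end

section
/- Let H be a hypergraph and π an ordering (bijection V → {1, ..., |V|}). If the greedy coloring algorithm Col(H, π) fails to properly 2-color H, then π separates at least one simple pair of edges of H. -/
open Classical

/-- Auxiliary function for the greedy coloring: `colAux E π k v` is the color of `v`
after processing the first `k` positions (vertices not yet processed default to Blue). -/
noncomputable def colAux {V : Type*} [Fintype V] [DecidableEq V] (E : Finset (Finset V))
    (π : V ≃ Fin (Fintype.card V)) : ℕ → V → Bool
  | 0, _ => true
  | k + 1, v =>
    if (π v : ℕ) = k then
      (if ∃ X ∈ E, v ∈ X ∧ ∀ u ∈ X, u ≠ v → (π u : ℕ) < k ∧ colAux E π k u = true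
       then false else true)
    else colAux E π k v

/-- The greedy coloring `Col(H, π)`: process vertices in the order `π`, coloring each
vertex Blue (`true`) unless that would complete an all-Blue edge, in which case Red (`false`). -/
noncomputable def greedyCol {V : Type*} [Fintype V] [DecidableEq V] (E : Finset (Finset V))
    (π : V ≃ Fin (Fintype.card V)) (v : V) : Bool :=
  colAux E π (Fintype.card V) v

lemma colAux_stab {V : Type*} [Fintype V] [DecidableEq V] (E : Finset (Finset V))
    (π : V ≃ Fin (Fintype.card V)) {k m : ℕ} (hkm : k ≤ m) {v : V} (hv : (π v : ℕ) < k) :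
    colAux E π m v = colAux E π k v := by
  induction m with
  | zero => omega
  | succ m ih =>
    rcases eq_or_lt_of_le hkm with h | h
    · rw [h]
    · have hne : (π v : ℕ) ≠ m := by omega
      rw [colAux, if_neg hne]
      exact ih (by omega)

lemma greedyCol_eq {V : Type*} [Fintype V] [DecidableEq V] (E : Finset (Finset V))
    (π : V ≃ Fin (Fintype.card V)) (v : V) :
    greedyCol E π v = colAux E π ((π v : ℕ) + 1) v :=
  colAux_stab E π (π v).isLt (by omega)

lemma colAux_succ_self {V : Type*} [Fintype V] [DecidableEq V] (E : Finset (Finset V))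
    (π : V ≃ Fin (Fintype.card V)) (v : V) :
    colAux E π ((π v : ℕ) + 1) v =
      (if ∃ X ∈ E, v ∈ X ∧ ∀ u ∈ X, u ≠ v → (π u : ℕ) < (π v : ℕ) ∧
          colAux E π (π v : ℕ) u = true
       then false else true) := by
  rw [colAux, if_pos rfl]

/-- No edge is all Blue under the greedy coloring. -/
lemma no_all_blue {V : Type*} [Fintype V] [DecidableEq V] (E : Finset (Finset V))
    (π : V ≃ Fin (Fintype.card V)) {X : Finset V} (hX : X ∈ E) (hXne : X.Nonempty) :
    ¬ ∀ v ∈ X, greedyCol E π v = true := by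
  intro hblue
  obtain ⟨y, hyX, hymax⟩ := X.exists_max_image (fun v => (π v : ℕ)) hXne
  have hlt : ∀ u ∈ X, u ≠ y → (π u : ℕ) < (π y : ℕ) := by
    intro u huX huy
    have := hymax u huX
    rcases lt_or_eq_of_le this with h | h
    · exact h
    · exact absurd (π.injective (Fin.ext h)) huy
  have hex : ∃ Z ∈ E, y ∈ Z ∧ ∀ u ∈ Z, u ≠ y → (π u : ℕ) < (π y : ℕ) ∧
      colAux E π (π y : ℕ) u = true := by
    refine ⟨X, hX, hyX, fun u huX huy => ⟨hlt u huX huy, ?_⟩⟩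
    have h1 : colAux E π (π y : ℕ) u = colAux E π ((π u : ℕ) + 1) u :=
      colAux_stab E π (by have := hlt u huX huy; omega) (by omega)
    rw [h1, ← greedyCol_eq]
    exact hblue u huX
  have := hblue y hyX
  rw [greedyCol_eq, colAux_succ_self, if_pos hex] at this
  exact Bool.false_ne_true this

theorem stmt_4 {V : Type*} [Fintype V] [DecidableEq V]
    (E : Finset (Finset V)) (hne : ∀ X ∈ E, X.Nonempty)
    (π : V ≃ Fin (Fintype.card V))
    (hfail : ∃ X ∈ E, (∀ v ∈ X, greedyCol E π v = true) ∨ (∀ v ∈ X, greedyCol E π v = false)) :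
    ∃ X ∈ E, ∃ Y ∈ E, (X ∩ Y).card = 1 ∧ Separates π X Y := by
  obtain ⟨Y, hYE, hb | hr⟩ := hfail
  · exact absurd hb (no_all_blue E π hYE (hne Y hYE))
  -- Y is all Red. Let y be the first vertex of Y.
  obtain ⟨y, hyY, hymin⟩ := Y.exists_min_image (fun v => (π v : ℕ)) (hne Y hYE)
  have hylt : ∀ z ∈ Y, z ≠ y → (π y : ℕ) < (π z : ℕ) := by
    intro z hzY hzy
    rcases lt_or_eq_of_le (hymin z hzY) with h | h
    · exact h
    · exact absurd (π.injective (Fin.ext h.symm)) hzy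
  have hyred := hr y hyY
  rw [greedyCol_eq, colAux_succ_self] at hyred
  by_cases hex : ∃ X ∈ E, y ∈ X ∧ ∀ u ∈ X, u ≠ y → (π u : ℕ) < (π y : ℕ) ∧
      colAux E π (π y : ℕ) u = true
  · obtain ⟨X, hXE, hyX, hXcond⟩ := hex
    -- every u ∈ X \ {y} is Blue
    have hXblue : ∀ u ∈ X, u ≠ y → greedyCol E π u = true := by
      intro u huX huy
      obtain ⟨hult, hucol⟩ := hXcond u huX huy
      rw [greedyCol_eq, ← colAux_stab E π (show (π u : ℕ) + 1 ≤ (π y : ℕ) by omega) (by omega)]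
      exact hucol
    have hinter : X ∩ Y = {y} := by
      apply Finset.eq_singleton_iff_unique_mem.mpr
      refine ⟨Finset.mem_inter.mpr ⟨hyX, hyY⟩, ?_⟩
      intro z hz
      rw [Finset.mem_inter] at hz
      by_contra hzy
      have h1 := hXblue z hz.1 hzy
      have h2 := hr z hz.2
      rw [h1] at h2
      simp at h2
    refine ⟨X, hXE, Y, hYE, by rw [hinter]; simp, y, hinter, ?_, ?_⟩
    · intro x hxX hxy
      exact Fin.mk_lt_mk.mp (by simpa using (hXcond x hxX hxy).1)
    · intro z hzY hzy
      exact Fin.mk_lt_mk.mp (by simpa using hylt z hzY hzy)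
  · rw [if_neg hex] at hyred
    simp at hyred
end

section
/- Let A₁, ..., Aₜ and B₁, ..., Bₜ be subsets of a p-element set V such that Aᵢ ∩ Bᵢ = ∅ for all i, and Aⱼ ⊄ Aᵢ ∪ Bᵢ for all i ≠ j. Then Σᵢ 1/C(p − |Bᵢ|, |Aᵢ|) ≤ 1. -/
open Classical

namespace BollobasAux
set_option linter.unusedSectionVars false

open Finset

lemma orderIsoOfFin_congr {α : Type*} [LinearOrder α] {s t : Finset α} {k : ℕ}
    (h : s = t) (hs : s.card = k) (ht : t.card = k) (j : Fin k) :
    (s.orderIsoOfFin hs j : α) = (t.orderIsoOfFin ht j : α) := by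
  subst h; rfl

lemma orderIsoOfFin_coe_inj {α : Type*} [LinearOrder α] {s : Finset α} {k : ℕ}
    (h : s.card = k) {i j : Fin k}
    (hij : (s.orderIsoOfFin h i : α) = (s.orderIsoOfFin h j : α)) : i = j :=
  (s.orderIsoOfFin h).injective (Subtype.ext hij)

variable {V : Type*} [Fintype V] [DecidableEq V] {p : ℕ}

variable (A B : Finset V)

lemma card_posP (σ : V ≃ Fin p) : ((B.map σ.toEmbedding)ᶜ).card = p - B.card := by
  simp [Finset.card_compl]

lemma card_mapA (σ : V ≃ Fin p) : (A.map σ.toEmbedding).card = A.card := Finset.card_map _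

variable (hp : Fintype.card V = p) (hAB : Disjoint A B)

include hp hAB in
lemma hab : A.card + B.card ≤ p := by
  rw [← Finset.card_union_of_disjoint hAB, ← hp, ← Finset.card_univ]
  exact Finset.card_le_card (Finset.subset_univ _)

include hp hAB in
lemma haw : A.card ≤ p - B.card := by
  have := hab A B hp hAB; omega

include hp hAB in
lemma card_mapC (σ : V ≃ Fin p) :
    (((A ∪ B)ᶜ).map σ.toEmbedding).card = p - (A.card + B.card) := by
  rw [Finset.card_map, Finset.card_compl, Finset.card_union_of_disjoint hAB, hp]

lemma boundC (k : Fin (p - (A.card + B.card))) (h : A.card + B.card ≤ p) :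
    A.card + (k : ℕ) < p - B.card := by
  have := k.isLt; omega

/-- The "sorted" version of σ : agrees with σ on B, and rearranges the rest so that
elements of A occupy the smallest positions outside `B.map σ`, keeping relative orders. -/
def resort (σ : V ≃ Fin p) : V → Fin p := fun x =>
  if hxB : x ∈ B then σ x
  else if hxA : x ∈ A then
    (((B.map σ.toEmbedding)ᶜ).orderIsoOfFin (card_posP B σ)
      ⟨(((A.map σ.toEmbedding).orderIsoOfFin (card_mapA A σ)).symm
          ⟨σ x, by simp [Finset.mem_map_equiv, hxA]⟩ : Fin A.card).1,
        lt_of_lt_of_le (Fin.isLt _) (haw A B hp hAB)⟩ : Fin p)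
  else
    (((B.map σ.toEmbedding)ᶜ).orderIsoOfFin (card_posP B σ)
      ⟨A.card + ((((A ∪ B)ᶜ).map σ.toEmbedding).orderIsoOfFin (card_mapC A B hp hAB σ)).symm
          ⟨σ x, by simp [Finset.mem_map_equiv, hxA, hxB]⟩,
        boundC A B _ (hab A B hp hAB)⟩ : Fin p)

lemma resort_spec_B {σ : V ≃ Fin p} {x : V} (h : x ∈ B) :
    resort A B hp hAB σ x = σ x := by
  simp [resort, h]

lemma resort_spec_A {σ : V ≃ Fin p} {x : V} (hxA : x ∈ A) :
    ∃ (j : Fin A.card) (hj : (j : ℕ) < p - B.card),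
      ((A.map σ.toEmbedding).orderIsoOfFin (card_mapA A σ) j : Fin p) = σ x ∧
      resort A B hp hAB σ x
        = (((B.map σ.toEmbedding)ᶜ).orderIsoOfFin (card_posP B σ) ⟨j, hj⟩ : Fin p) := by
  have hxB : x ∉ B := fun h => Finset.disjoint_left.mp hAB hxA h
  refine ⟨((A.map σ.toEmbedding).orderIsoOfFin (card_mapA A σ)).symm
      ⟨σ x, by simp [Finset.mem_map_equiv, hxA]⟩,
    lt_of_lt_of_le (Fin.isLt _) (haw A B hp hAB), ?_, ?_⟩
  · rw [OrderIso.apply_symm_apply]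
  · simp [resort, hxB, hxA]

lemma resort_spec_C {σ : V ≃ Fin p} {x : V} (hxB : x ∉ B) (hxA : x ∉ A) :
    ∃ (k : Fin (p - (A.card + B.card))) (hk : A.card + (k : ℕ) < p - B.card),
      ((((A ∪ B)ᶜ).map σ.toEmbedding).orderIsoOfFin (card_mapC A B hp hAB σ) k : Fin p) = σ x ∧
      resort A B hp hAB σ x
        = (((B.map σ.toEmbedding)ᶜ).orderIsoOfFin (card_posP B σ) ⟨A.card + k, hk⟩ : Fin p) := by
  refine ⟨((((A ∪ B)ᶜ).map σ.toEmbedding).orderIsoOfFin (card_mapC A B hp hAB σ)).symm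
      ⟨σ x, by simp [Finset.mem_map_equiv, hxA, hxB]⟩,
    boundC A B _ (hab A B hp hAB), ?_, ?_⟩
  · rw [OrderIso.apply_symm_apply]
  · simp [resort, hxB, hxA]

lemma resort_injective (σ : V ≃ Fin p) : Function.Injective (resort A B hp hAB σ) := by
  intro x y hxy
  by_cases hxB : x ∈ B <;> by_cases hyB : y ∈ B
  · rw [resort_spec_B A B hp hAB hxB, resort_spec_B A B hp hAB hyB] at hxy
    exact σ.injective hxy
  · exfalso
    rw [resort_spec_B A B hp hAB hxB] at hxy
    have hmem : resort A B hp hAB σ y ∈ (B.map σ.toEmbedding)ᶜ := by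
      by_cases hyA : y ∈ A
      · obtain ⟨j, hj, -, hr⟩ := resort_spec_A A B hp hAB (σ := σ) hyA
        rw [hr]; exact Subtype.coe_prop _
      · obtain ⟨k, hk, -, hr⟩ := resort_spec_C A B hp hAB (σ := σ) hyB hyA
        rw [hr]; exact Subtype.coe_prop _
    rw [← hxy] at hmem
    exact (Finset.mem_compl.mp hmem) (Finset.mem_map_of_mem _ hxB)
  · exfalso
    rw [resort_spec_B A B hp hAB hyB] at hxy
    have hmem : resort A B hp hAB σ x ∈ (B.map σ.toEmbedding)ᶜ := by
      by_cases hxA : x ∈ A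
      · obtain ⟨j, hj, -, hr⟩ := resort_spec_A A B hp hAB (σ := σ) hxA
        rw [hr]; exact Subtype.coe_prop _
      · obtain ⟨k, hk, -, hr⟩ := resort_spec_C A B hp hAB (σ := σ) hxB hxA
        rw [hr]; exact Subtype.coe_prop _
    rw [hxy] at hmem
    exact (Finset.mem_compl.mp hmem) (Finset.mem_map_of_mem _ hyB)
  · by_cases hxA : x ∈ A <;> by_cases hyA : y ∈ A
    · obtain ⟨j₁, h₁, e₁, r₁⟩ := resort_spec_A A B hp hAB (σ := σ) hxA
      obtain ⟨j₂, h₂, e₂, r₂⟩ := resort_spec_A A B hp hAB (σ := σ) hyA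
      rw [r₁, r₂] at hxy
      have hv := congrArg Fin.val (orderIsoOfFin_coe_inj (card_posP B σ) hxy)
      have hj : j₁ = j₂ := Fin.ext hv
      subst hj
      exact σ.injective (e₁.symm.trans e₂)
    · obtain ⟨j₁, h₁, e₁, r₁⟩ := resort_spec_A A B hp hAB (σ := σ) hxA
      obtain ⟨k₂, h₂, e₂, r₂⟩ := resort_spec_C A B hp hAB (σ := σ) hyB hyA
      rw [r₁, r₂] at hxy
      have := congrArg Fin.val (orderIsoOfFin_coe_inj (card_posP B σ) hxy)
      simp only at this
      omega
    · obtain ⟨k₁, h₁, e₁, r₁⟩ := resort_spec_C A B hp hAB (σ := σ) hxB hxA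
      obtain ⟨j₂, h₂, e₂, r₂⟩ := resort_spec_A A B hp hAB (σ := σ) hyA
      rw [r₁, r₂] at hxy
      have := congrArg Fin.val (orderIsoOfFin_coe_inj (card_posP B σ) hxy)
      simp only at this
      omega
    · obtain ⟨k₁, h₁, e₁, r₁⟩ := resort_spec_C A B hp hAB (σ := σ) hxB hxA
      obtain ⟨k₂, h₂, e₂, r₂⟩ := resort_spec_C A B hp hAB (σ := σ) hyB hyA
      rw [r₁, r₂] at hxy
      have hv := congrArg Fin.val (orderIsoOfFin_coe_inj (card_posP B σ) hxy)
      simp only at hv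
      have hk : k₁ = k₂ := Fin.ext (by omega)
      subst hk
      exact σ.injective (e₁.symm.trans e₂)

noncomputable def resortEquiv (σ : V ≃ Fin p) : V ≃ Fin p :=
  Equiv.ofBijective (resort A B hp hAB σ)
    ((Fintype.bijective_iff_injective_and_card _).mpr
      ⟨resort_injective A B hp hAB σ, by simp [hp]⟩)

lemma resortEquiv_apply (σ : V ≃ Fin p) (x : V) :
    resortEquiv A B hp hAB σ x = resort A B hp hAB σ x := rfl

lemma resortEquiv_mem (σ : V ≃ Fin p) :
    ∀ x ∈ A, ∀ y, y ∉ A ∪ B → resortEquiv A B hp hAB σ x < resortEquiv A B hp hAB σ y := by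
  intro x hx y hy
  have hyA : y ∉ A := fun h => hy (Finset.mem_union_left _ h)
  have hyB : y ∉ B := fun h => hy (Finset.mem_union_right _ h)
  obtain ⟨j, hj, -, r₁⟩ := resort_spec_A A B hp hAB (σ := σ) hx
  obtain ⟨k, hk, -, r₂⟩ := resort_spec_C A B hp hAB (σ := σ) hyB hyA
  rw [resortEquiv_apply, resortEquiv_apply, r₁, r₂]
  have hlt : (⟨(j : ℕ), hj⟩ : Fin (p - B.card)) < ⟨A.card + k, hk⟩ := by
    simp only [Fin.mk_lt_mk]
    have := j.isLt; omega
  exact (((B.map σ.toEmbedding)ᶜ).orderIsoOfFin (card_posP B σ)).strictMono hlt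

lemma mapB_resort (σ : V ≃ Fin p) :
    B.map (resortEquiv A B hp hAB σ).toEmbedding = B.map σ.toEmbedding := by
  ext q
  simp only [Finset.mem_map, Equiv.coe_toEmbedding]
  constructor
  · rintro ⟨x, hx, rfl⟩
    exact ⟨x, hx, (resort_spec_B A B hp hAB hx).symm⟩
  · rintro ⟨x, hx, rfl⟩
    exact ⟨x, hx, resort_spec_B A B hp hAB hx⟩

lemma mapC_eq (σ : V ≃ Fin p) :
    ((A ∪ B)ᶜ).map σ.toEmbedding
      = (B.map σ.toEmbedding)ᶜ \ (A.map σ.toEmbedding) := by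
  ext q
  simp only [Finset.mem_map_equiv, Finset.mem_sdiff, Finset.mem_compl, Finset.mem_union]
  tauto

lemma g_injective (σ₁ σ₂ : V ≃ Fin p)
    (hres : resortEquiv A B hp hAB σ₁ = resortEquiv A B hp hAB σ₂)
    (hQ : A.map σ₁.toEmbedding = A.map σ₂.toEmbedding) : σ₁ = σ₂ := by
  have hres' : ∀ x, resort A B hp hAB σ₁ x = resort A B hp hAB σ₂ x := by
    intro x
    rw [← resortEquiv_apply, ← resortEquiv_apply, hres]
  have hBag : ∀ x ∈ B, σ₁ x = σ₂ x := by
    intro x hx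
    rw [← resort_spec_B A B hp hAB hx, ← resort_spec_B A B hp hAB hx]
    exact hres' x
  have hPeq : B.map σ₁.toEmbedding = B.map σ₂.toEmbedding := by
    ext q
    simp only [Finset.mem_map, Equiv.coe_toEmbedding]
    constructor
    · rintro ⟨x, hx, rfl⟩; exact ⟨x, hx, (hBag x hx).symm⟩
    · rintro ⟨x, hx, rfl⟩; exact ⟨x, hx, hBag x hx⟩
  have hReq : ((A ∪ B)ᶜ).map σ₁.toEmbedding = ((A ∪ B)ᶜ).map σ₂.toEmbedding := by
    rw [mapC_eq, mapC_eq, hPeq, hQ]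
  refine Equiv.ext fun x => ?_
  by_cases hxB : x ∈ B
  · exact hBag x hxB
  by_cases hxA : x ∈ A
  · obtain ⟨j₁, h₁, e₁, r₁⟩ := resort_spec_A A B hp hAB (σ := σ₁) hxA
    obtain ⟨j₂, h₂, e₂, r₂⟩ := resort_spec_A A B hp hAB (σ := σ₂) hxA
    have hx2 : (((B.map σ₂.toEmbedding)ᶜ).orderIsoOfFin (card_posP B σ₂) ⟨(j₁ : ℕ), h₁⟩ : Fin p)
        = (((B.map σ₂.toEmbedding)ᶜ).orderIsoOfFin (card_posP B σ₂) ⟨(j₂ : ℕ), h₂⟩ : Fin p) := by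
      rw [← orderIsoOfFin_congr (congrArg compl hPeq) (card_posP B σ₁) (card_posP B σ₂)]
      rw [← r₁, ← r₂]
      exact hres' x
    have hv := congrArg Fin.val (orderIsoOfFin_coe_inj _ hx2)
    have hj : j₁ = j₂ := Fin.ext hv
    refine e₁.symm.trans (Eq.trans ?_ e₂)
    rw [← hj]
    exact orderIsoOfFin_congr hQ _ _ j₁
  · obtain ⟨k₁, h₁, e₁, r₁⟩ := resort_spec_C A B hp hAB (σ := σ₁) hxB hxA
    obtain ⟨k₂, h₂, e₂, r₂⟩ := resort_spec_C A B hp hAB (σ := σ₂) hxB hxA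
    have hx2 : (((B.map σ₂.toEmbedding)ᶜ).orderIsoOfFin (card_posP B σ₂) ⟨A.card + (k₁ : ℕ), h₁⟩ : Fin p)
        = (((B.map σ₂.toEmbedding)ᶜ).orderIsoOfFin (card_posP B σ₂) ⟨A.card + (k₂ : ℕ), h₂⟩ : Fin p) := by
      rw [← orderIsoOfFin_congr (congrArg compl hPeq) (card_posP B σ₁) (card_posP B σ₂)]
      rw [← r₁, ← r₂]
      exact hres' x
    have hv := congrArg Fin.val (orderIsoOfFin_coe_inj _ hx2)
    simp only at hv
    have hk : k₁ = k₂ := Fin.ext (by omega)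
    refine e₁.symm.trans (Eq.trans ?_ e₂)
    rw [← hk]
    exact orderIsoOfFin_congr hReq _ _ k₁

include hp hAB in
lemma key :
    Nat.factorial p
      ≤ (Finset.univ.filter
            (fun σ : V ≃ Fin p => ∀ x ∈ A, ∀ y, y ∉ A ∪ B → σ x < σ y)).card
          * Nat.choose (p - B.card) A.card := by
  classical
  set S : Finset (V ≃ Fin p) :=
    Finset.univ.filter (fun σ : V ≃ Fin p => ∀ x ∈ A, ∀ y, y ∉ A ∪ B → σ x < σ y) with hS
  let g : (V ≃ Fin p) → (V ≃ Fin p) × Finset (Fin p) :=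
    fun σ => (resortEquiv A B hp hAB σ, A.map σ.toEmbedding)
  have ginj : Function.Injective g := by
    intro σ₁ σ₂ h
    rw [Prod.ext_iff] at h
    exact g_injective A B hp hAB σ₁ σ₂ h.1 h.2
  set T : Finset ((V ≃ Fin p) × Finset (Fin p)) :=
    S.biUnion (fun τ =>
      (((B.map τ.toEmbedding)ᶜ).powersetCard A.card).image (fun Q => (τ, Q))) with hT
  have h1 : (Finset.univ : Finset (V ≃ Fin p)).image g ⊆ T := by
    intro pr hpr
    obtain ⟨σ, -, rfl⟩ := Finset.mem_image.mp hpr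
    rw [hT, Finset.mem_biUnion]
    refine ⟨resortEquiv A B hp hAB σ, ?_, ?_⟩
    · rw [hS, Finset.mem_filter]
      exact ⟨Finset.mem_univ _, resortEquiv_mem A B hp hAB σ⟩
    · rw [Finset.mem_image]
      refine ⟨A.map σ.toEmbedding, ?_, rfl⟩
      rw [Finset.mem_powersetCard]
      refine ⟨?_, Finset.card_map _⟩
      rw [mapB_resort]
      intro q hq
      rw [Finset.mem_map_equiv] at hq
      rw [Finset.mem_compl, Finset.mem_map_equiv]
      exact fun hqB => Finset.disjoint_left.mp hAB hq hqB
  have h2 : T.card ≤ S.card * Nat.choose (p - B.card) A.card := by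
    refine le_trans (Finset.card_biUnion_le) ?_
    calc ∑ τ ∈ S, ((((B.map τ.toEmbedding)ᶜ).powersetCard A.card).image (fun Q => (τ, Q))).card
        ≤ ∑ _τ ∈ S, Nat.choose (p - B.card) A.card :=
          Finset.sum_le_sum (fun τ _ => le_trans Finset.card_image_le
            (le_of_eq (by rw [Finset.card_powersetCard, card_posP])))
      _ = S.card * Nat.choose (p - B.card) A.card := by
          rw [Finset.sum_const, smul_eq_mul]
  have h3 : Nat.factorial p = ((Finset.univ : Finset (V ≃ Fin p)).image g).card := by
    rw [Finset.card_image_of_injective _ ginj, Finset.card_univ,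
      Fintype.card_equiv (Fintype.equivFinOfCardEq hp), hp]
  rw [h3]
  exact le_trans (Finset.card_le_card h1) h2

end BollobasAux

theorem stmt_6 {V : Type*} [Fintype V] [DecidableEq V] (p t : ℕ)
    (hp : Fintype.card V = p) (A B : Fin t → Finset V)
    (hdisj : ∀ i, Disjoint (A i) (B i))
    (hskew : ∀ i j, i ≠ j → ¬ A j ⊆ A i ∪ B i) :
    ∑ i : Fin t, (1 : ℚ) / (Nat.choose (p - (B i).card) ((A i).card) : ℚ) ≤ 1 := by
  classical
  set S : Fin t → Finset (V ≃ Fin p) := fun i =>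
    Finset.univ.filter (fun σ : V ≃ Fin p => ∀ x ∈ A i, ∀ y, y ∉ A i ∪ B i → σ x < σ y) with hSdef
  have hdisjS : ∀ i j, i ≠ j → Disjoint (S i) (S j) := by
    intro i j hij
    rw [Finset.disjoint_left]
    intro σ hσi hσj
    rw [hSdef, Finset.mem_filter] at hσi hσj
    obtain ⟨x, hxj, hxi⟩ := Finset.not_subset.mp (hskew i j hij)
    obtain ⟨y, hyi, hyj⟩ := Finset.not_subset.mp (hskew j i hij.symm)
    exact absurd ((hσi.2 y hyi x hxi).trans (hσj.2 x hxj y hyj)) (lt_irrefl _)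
  have hkey : ∀ i, Nat.factorial p
      ≤ (S i).card * Nat.choose (p - (B i).card) ((A i).card) :=
    fun i => BollobasAux.key (A i) (B i) hp (hdisj i)
  have hcpos : ∀ i, 0 < Nat.choose (p - (B i).card) ((A i).card) :=
    fun i => Nat.choose_pos (BollobasAux.haw (A i) (B i) hp (hdisj i))
  have hfpos : (0 : ℚ) < (Nat.factorial p : ℚ) := by
    exact_mod_cast Nat.factorial_pos p
  have hsum : ∑ i : Fin t, (S i).card ≤ Nat.factorial p := by
    rw [← Finset.card_biUnion (fun i _ j _ hij => hdisjS i j hij)]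
    calc (Finset.univ.biUnion S).card
        ≤ (Finset.univ : Finset (V ≃ Fin p)).card := Finset.card_le_card (Finset.subset_univ _)
      _ = Nat.factorial p := by
          rw [Finset.card_univ, Fintype.card_equiv (Fintype.equivFinOfCardEq hp), hp]
  calc ∑ i : Fin t, (1 : ℚ) / (Nat.choose (p - (B i).card) ((A i).card) : ℚ)
      ≤ ∑ i : Fin t, ((S i).card : ℚ) / (Nat.factorial p : ℚ) := by
        refine Finset.sum_le_sum (fun i _ => ?_)
        rw [div_le_div_iff₀ (by exact_mod_cast hcpos i) hfpos, one_mul]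
        exact_mod_cast hkey i
    _ = (∑ i : Fin t, ((S i).card : ℚ)) / (Nat.factorial p : ℚ) := by
        rw [Finset.sum_div]
    _ ≤ 1 := by
        rw [div_le_one hfpos]
        exact_mod_cast hsum
end

section
/- Let H be an n-uniform hypergraph in which every ordering of the vertices separates at most one simple pair. If (X, Y) and (X', Y) are simple pairs of edges of H with X ≠ X', then X ∩ Y ≠ X' ∩ Y. -/
open Classical

lemma exists_equivFin_lt_of_lt {V β : Type*} [Fintype V] [LinearOrder β] (key : V → β) :
    ∃ π : V ≃ Fin (Fintype.card V), ∀ v w, key v < key w → π v < π w := by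
  let e := Fintype.equivFin V
  let σ := Tuple.sort (key ∘ e.symm)
  refine ⟨e.trans σ.symm, fun v w hlt => ?_⟩
  by_contra! hle
  have := Tuple.monotone_sort (key ∘ e.symm) hle
  simp only [Function.comp_apply, Equiv.trans_apply, Equiv.apply_symm_apply,
    Equiv.symm_apply_apply, σ] at this
  exact (lt_of_lt_of_le hlt this).false

lemma separates_of_lt {V β : Type*} [Fintype V] [DecidableEq V] [Preorder β]
    {π : V ≃ Fin (Fintype.card V)} {key : V → β} (hπ : ∀ v w, key v < key w → π v < π w)
    {X Y : Finset V} {y : V} (hXY : X ∩ Y = {y})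
    (hX : ∀ x ∈ X, x ≠ y → key x < key y) (hY : ∀ z ∈ Y, z ≠ y → key y < key z) :
    Separates π X Y :=
  ⟨y, hXY, fun x hx hxy => hπ _ _ (hX x hx hxy), fun z hz hzy => hπ _ _ (hY z hz hzy)⟩

lemma exists_separates_of_inter_eq {V : Type*} [Fintype V] [DecidableEq V]
    {X X' Y : Finset V} {y : V} (hXY : X ∩ Y = {y}) (hX'Y : X' ∩ Y = {y}) :
    ∃ π : V ≃ Fin (Fintype.card V), Separates π X Y ∧ Separates π X' Y := by
  -- order `(X ∪ X') \ {y}` first, then `y`, then everything else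
  let key : V → ℕ := fun v => if v = y then 1 else if v ∈ X ∪ X' then 0 else 2
  obtain ⟨π, hπ⟩ := exists_equivFin_lt_of_lt key
  have hmem {Z : Finset V} (hZY : Z ∩ Y = {y}) {z : V} (hz : z ∈ Y) (hzy : z ≠ y) : z ∉ Z :=
    fun hzZ => hzy (Finset.mem_singleton.mp (hZY ▸ Finset.mem_inter.mpr ⟨hzZ, hz⟩))
  have hY : ∀ z ∈ Y, z ≠ y → key y < key z := fun z hz hzy => by
    simp [key, hzy, hmem hXY hz hzy, hmem hX'Y hz hzy]
  exact ⟨π, separates_of_lt hπ hXY (fun x hx hxy => by simp [key, hxy, hx]) hY,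
    separates_of_lt hπ hX'Y (fun x hx hxy => by simp [key, hxy, hx]) hY⟩

theorem stmt_9_general {V : Type*} [Fintype V] [DecidableEq V]
    (E : Finset (Finset V))
    (hsep : ∀ π : V ≃ Fin (Fintype.card V),
      ∀ X ∈ E, ∀ Y ∈ E, ∀ X' ∈ E, ∀ Y' ∈ E,
        (X ∩ Y).card = 1 → (X' ∩ Y').card = 1 →
        Separates π X Y → Separates π X' Y' → X = X' ∧ Y = Y')
    (X : Finset V) (hX : X ∈ E) (X' : Finset V) (hX' : X' ∈ E)
    (Y : Finset V) (hY : Y ∈ E)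
    (h1 : (X ∩ Y).card = 1) (h2 : (X' ∩ Y).card = 1) (hne : X ≠ X') :
    X ∩ Y ≠ X' ∩ Y := by
  intro heq
  obtain ⟨y, hy⟩ := Finset.card_eq_one.mp h1
  obtain ⟨π, hXY, hX'Y⟩ := exists_separates_of_inter_eq hy (heq ▸ hy)
  exact hne (hsep π X hX Y hY X' hX' Y hY h1 h2 hXY hX'Y).1

theorem stmt_9 {V : Type*} [Fintype V] [DecidableEq V] (n : ℕ)
    (E : Finset (Finset V)) (hunif : ∀ X ∈ E, X.card = n)
    (hsep : ∀ π : V ≃ Fin (Fintype.card V),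
      ∀ X ∈ E, ∀ Y ∈ E, ∀ X' ∈ E, ∀ Y' ∈ E,
        (X ∩ Y).card = 1 → (X' ∩ Y').card = 1 →
        Separates π X Y → Separates π X' Y' → X = X' ∧ Y = Y')
    (X : Finset V) (hX : X ∈ E) (X' : Finset V) (hX' : X' ∈ E)
    (Y : Finset V) (hY : Y ∈ E)
    (h1 : (X ∩ Y).card = 1) (h2 : (X' ∩ Y).card = 1) (hne : X ≠ X') :
    X ∩ Y ≠ X' ∩ Y :=
  stmt_9_general E hsep X hX X' hX' Y hY h1 h2 hne
end

section
/- If there exists an ordering π of the vertices of a hypergraph H that separates no simple pair of edges, then H is 2-colorable. -/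
/-!
Color the vertices greedily in the order `π`: a vertex `v` becomes `true` exactly when some
edge has `v` as its last vertex and all its earlier vertices are already `false`. The last
vertex of an edge is then never left `false` with the rest of the edge, so no edge is all
`false`. If an edge `X` were all `true`, its first vertex `y` would have been made `true`
by an edge `X'` ending at `y` whose other vertices are `false`, hence outside `X`; so
`X' ∩ X = {y}` and `π` separates the simple pair `(X', X)`.
-/

open Classical

section GreedyColoring

variable {V α : Type*} [LinearOrder α] [WellFoundedLT α]

noncomputable def greedyColor (E : Finset (Finset V)) (f : V → α) : V → Bool :=
  (InvImage.wf f wellFounded_lt).fix fun v ih =>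
    decide (∃ X ∈ E, v ∈ X ∧ ∀ x ∈ X, x ≠ v → ∃ h : f x < f v, ih x h = false)

theorem greedyColor_eq_true_iff (E : Finset (Finset V)) (f : V → α) (v : V) :
    greedyColor E f v = true ↔
      ∃ X ∈ E, v ∈ X ∧ ∀ x ∈ X, x ≠ v → f x < f v ∧ greedyColor E f x = false := by
  rw [greedyColor, WellFounded.fix_eq, decide_eq_true_iff]
  simp only [exists_prop]

theorem exists_greedyColor_eq_true {E : Finset (Finset V)} {f : V → α}
    (hf : Function.Injective f) {X : Finset V} (hX : X ∈ E) (hne : X.Nonempty) :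
    ∃ v ∈ X, greedyColor E f v = true := by
  obtain ⟨v, hvX, hmax⟩ := X.exists_max_image f hne
  by_contra! hfalse
  refine hfalse v hvX ((greedyColor_eq_true_iff E f v).2 ⟨X, hX, hvX, fun x hx hxv => ?_⟩)
  exact ⟨(hmax x hx).lt_of_ne (hf.ne hxv), Bool.eq_false_iff.2 (hfalse x hx)⟩

theorem exists_simple_pair_of_greedyColor_eq_true [DecidableEq V] {E : Finset (Finset V)} {f : V → α}
    (hf : Function.Injective f) {X : Finset V} (hne : X.Nonempty)
    (htrue : ∀ v ∈ X, greedyColor E f v = true) :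
    ∃ X' ∈ E, ∃ y, X' ∩ X = {y} ∧ (∀ x ∈ X', x ≠ y → f x < f y) ∧
      ∀ z ∈ X, z ≠ y → f y < f z := by
  obtain ⟨y, hyX, hmin⟩ := X.exists_min_image f hne
  obtain ⟨X', hX', hyX', hX'y⟩ := (greedyColor_eq_true_iff E f y).1 (htrue y hyX)
  have hinter : X' ∩ X = {y} := by
    refine Finset.eq_singleton_iff_unique_mem.2 ⟨Finset.mem_inter.2 ⟨hyX', hyX⟩, ?_⟩
    intro x hx
    by_contra hxy
    have hfalse := (hX'y x (Finset.mem_inter.1 hx).1 hxy).2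
    simp [htrue x (Finset.mem_inter.1 hx).2] at hfalse
  exact ⟨X', hX', y, hinter, fun x hx hxy => (hX'y x hx hxy).1,
    fun z hz hzy => (hmin z hz).lt_of_ne (hf.ne hzy).symm⟩

end GreedyColoring

theorem stmt_14 {V : Type*} [Fintype V] [DecidableEq V]
    (E : Finset (Finset V)) (hne : ∀ X ∈ E, X.Nonempty)
    (hπ : ∃ π : V ≃ Fin (Fintype.card V),
      ∀ X ∈ E, ∀ Y ∈ E, (X ∩ Y).card = 1 → ¬ Separates π X Y) :
    TwoColorable E := by
  obtain ⟨π, hsep⟩ := hπ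
  refine ⟨greedyColor E π, fun X hX => ⟨exists_greedyColor_eq_true π.injective hX (hne X hX), ?_⟩⟩
  by_contra! htrue
  simp only [ne_eq, Bool.not_eq_false] at htrue
  obtain ⟨X', hX', y, hinter, hsepXX'⟩ :=
    exists_simple_pair_of_greedyColor_eq_true π.injective (hne X hX) htrue
  exact hsep X' hX' X hX (by simp [hinter]) ⟨y, hinter, hsepXX'⟩
end

section
/- Let H be an n-uniform hypergraph with vertex set V of size p, and suppose every ordering of V separates at most one simple pair. Let M be a set of simple pairs of H containing at most one pair with any given second coordinate. Then the family of set pairs (A_s, B_s) for s = (X, Y) ∈ M, where A_s = X \ Y and B_s = V \ (X ∪ Y), satisfies: A_s ∩ B_s = ∅ for all s, and A_s ⊄ A_{s'} ∪ B_{s'} for all distinct s, s' ∈ M. -/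
open Classical

/-- Any key function `k : V → ℕ` can be refined to a full ordering of `V`. -/
private lemma exists_pi {V : Type*} [Fintype V] [DecidableEq V] (k : V → ℕ) :
    ∃ π : V ≃ Fin (Fintype.card V), ∀ x y, k x < k y → π x < π y := by
  classical
  set N := Fintype.card V with hN
  let e := Fintype.equivFin V
  let f : V → ℕ := fun v => k v * (N + 1) + (e v : ℕ)
  have hbound : ∀ v, (e v : ℕ) < N + 1 := fun v => Nat.lt_succ_of_lt (e v).2
  have hmono : ∀ a b, k a < k b → f a < f b := by
    intro a b h
    have h1 : f a < (k a + 1) * (N + 1) := by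
      have := hbound a
      simp only [f, add_mul, one_mul]
      omega
    have h2 : (k a + 1) * (N + 1) ≤ k b * (N + 1) := Nat.mul_le_mul_right _ h
    have h3 : k b * (N + 1) ≤ f b := Nat.le_add_right _ _
    omega
  have hinj : Function.Injective f := by
    intro a b hab
    rcases lt_trichotomy (k a) (k b) with h | h | h
    · exact absurd hab (Nat.ne_of_lt (hmono a b h))
    · have hea : (e a : ℕ) = (e b : ℕ) := by
        simp only [f, h] at hab; omega
      exact e.injective (Fin.ext hea)
    · exact absurd hab.symm (Nat.ne_of_lt (hmono b a h))
  letI : LinearOrder V := LinearOrder.lift' f hinj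
  let oiso := (monoEquivOfFin V rfl).symm
  refine ⟨oiso.toEquiv, fun a b h => ?_⟩
  have hf : f a < f b := hmono a b h
  have hlt : a < b := by
    rw [lt_iff_le_not_ge]
    constructor
    · show f a ≤ f b
      exact hf.le
    · show ¬ f b ≤ f a
      omega
  exact oiso.lt_iff_lt.mpr hlt

theorem stmt_16 {V : Type*} [Fintype V] [DecidableEq V] (n p : ℕ)
    (hp : Fintype.card V = p)
    (E : Finset (Finset V)) (hunif : ∀ X ∈ E, X.card = n)
    (hsep : ∀ π : V ≃ Fin (Fintype.card V),
      ∀ X ∈ E, ∀ Y ∈ E, ∀ X' ∈ E, ∀ Y' ∈ E,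
        (X ∩ Y).card = 1 → (X' ∩ Y').card = 1 →
        Separates π X Y → Separates π X' Y' → X = X' ∧ Y = Y')
    (M : Finset (Finset V × Finset V))
    (hMsimple : ∀ s ∈ M, s.1 ∈ E ∧ s.2 ∈ E ∧ (s.1 ∩ s.2).card = 1)
    (hMinj : ∀ s ∈ M, ∀ s' ∈ M, s.2 = s'.2 → s = s') :
    (∀ s ∈ M, Disjoint (s.1 \ s.2) (Finset.univ \ (s.1 ∪ s.2))) ∧
      ∀ s ∈ M, ∀ s' ∈ M, s ≠ s' →
        ¬ (s.1 \ s.2) ⊆ (s'.1 \ s'.2) ∪ (Finset.univ \ (s'.1 ∪ s'.2)) := by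
  constructor
  · intro s hs
    rw [Finset.disjoint_left]
    intro a ha hb
    rw [Finset.mem_sdiff] at ha hb
    exact hb.2 (Finset.mem_union_left _ ha.1)
  · intro s hs s' hs' hne hsub
    obtain ⟨hXE, hYE, hcard⟩ := hMsimple s hs
    obtain ⟨hX'E, hY'E, hcard'⟩ := hMsimple s' hs'
    obtain ⟨y, hy⟩ := Finset.card_eq_one.mp hcard
    obtain ⟨y', hy'⟩ := Finset.card_eq_one.mp hcard'
    set X := s.1 with hX
    set Y := s.2 with hYdef
    set X' := s'.1 with hX'
    set Y' := s'.2 with hY'def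
    have hyXY : y ∈ X ∩ Y := hy ▸ Finset.mem_singleton_self y
    have hyX : y ∈ X := (Finset.mem_inter.mp hyXY).1
    have hyY : y ∈ Y := (Finset.mem_inter.mp hyXY).2
    have hy'XY : y' ∈ X' ∩ Y' := hy' ▸ Finset.mem_singleton_self y'
    have hy'X' : y' ∈ X' := (Finset.mem_inter.mp hy'XY).1
    have hy'Y' : y' ∈ Y' := (Finset.mem_inter.mp hy'XY).2
    -- every element of X ∩ Y' equals y
    have hXY' : ∀ a, a ∈ X → a ∈ Y' → a = y := by
      intro a haX haY'
      by_cases haY : a ∈ Y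
      · have : a ∈ X ∩ Y := Finset.mem_inter.mpr ⟨haX, haY⟩
        rw [hy] at this
        exact Finset.mem_singleton.mp this
      · have hmem : a ∈ X \ Y := Finset.mem_sdiff.mpr ⟨haX, haY⟩
        rcases Finset.mem_union.mp (hsub hmem) with h | h
        · exact absurd haY' (Finset.mem_sdiff.mp h).2
        · exact absurd (Finset.mem_union_right _ haY') (Finset.mem_sdiff.mp h).2
    have hYne : Y ≠ Y' := fun h => hne (hMinj s hs s' hs' h)
    by_cases hyY' : y ∈ Y'
    · -- Case A: y ∈ Y'.  Then X ∩ Y' = {y}; separate (X, Y) and (X, Y') simultaneously.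
      have hXY'eq : X ∩ Y' = {y} := by
        apply Finset.Subset.antisymm
        · intro a ha
          rw [Finset.mem_singleton]
          exact hXY' a (Finset.mem_inter.mp ha).1 (Finset.mem_inter.mp ha).2
        · intro a ha
          rw [Finset.mem_singleton] at ha
          subst ha
          exact Finset.mem_inter.mpr ⟨hyX, hyY'⟩
      set k : V → ℕ := fun v => if v ∈ X ∧ v ≠ y then 0 else if v = y then 1 else 2 with hk
      obtain ⟨π, hπ⟩ := exists_pi k
      have hky : k y = 1 := by simp [hk]
      have hklow : ∀ x ∈ X, x ≠ y → π x < π y := by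
        intro x hx hxy
        apply hπ
        rw [hky, hk]
        simp [hx, hxy]
      have hkhigh : ∀ {W : Finset V}, X ∩ W = {y} → ∀ z ∈ W, z ≠ y → π y < π z := by
        intro W hW z hz hzy
        apply hπ
        have hzX : z ∉ X := by
          intro hzX
          have : z ∈ X ∩ W := Finset.mem_inter.mpr ⟨hzX, hz⟩
          rw [hW, Finset.mem_singleton] at this
          exact hzy this
        rw [hky, hk]
        simp only
        rw [if_neg (fun h => hzX h.1), if_neg hzy]
        omega
      have sep1 : Separates π X Y := ⟨y, hy, hklow, hkhigh hy⟩
      have sep2 : Separates π X Y' := ⟨y, hXY'eq, hklow, hkhigh hXY'eq⟩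
      have := hsep π X hXE Y hYE X hXE Y' hY'E hcard
        (by rw [hXY'eq]; exact Finset.card_singleton y) sep1 sep2
      exact hYne this.2
    · -- Case B: y ∉ Y'.  Then X ∩ Y' = ∅; separate (X, Y) and (X', Y') simultaneously.
      have hXY'empty : X ∩ Y' = ∅ := by
        apply Finset.eq_empty_of_forall_notMem
        intro a ha
        have := hXY' a (Finset.mem_inter.mp ha).1 (Finset.mem_inter.mp ha).2
        subst this
        exact hyY' (Finset.mem_inter.mp ha).2
      have hy'X : y' ∉ X := by
        intro h
        have : y' ∈ X ∩ Y' := Finset.mem_inter.mpr ⟨h, hy'Y'⟩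
        rw [hXY'empty] at this
        exact absurd this (Finset.notMem_empty y')
      have hyy' : y ≠ y' := fun h => hy'X (h ▸ hyX)
      set k : V → ℕ := fun v =>
        if v ∈ X ∧ v ≠ y then 0 else if v = y then 1
        else if v ∈ X' ∧ v ≠ y' then 2 else if v = y' then 3 else 4 with hk
      obtain ⟨π, hπ⟩ := exists_pi k
      have hky : k y = 1 := by simp [hk]
      have hky' : k y' = 3 := by
        rw [hk]
        simp only
        rw [if_neg (fun h => hy'X h.1), if_neg (Ne.symm hyy'),
          if_neg (fun h => h.2 rfl)]
        simp
      have sep1 : Separates π X Y := by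
        refine ⟨y, hy, fun x hx hxy => ?_, fun z hz hzy => ?_⟩
        · apply hπ
          rw [hky, hk]
          simp [hx, hxy]
        · apply hπ
          have hzX : z ∉ X := by
            intro hzX
            have : z ∈ X ∩ Y := Finset.mem_inter.mpr ⟨hzX, hz⟩
            rw [hy, Finset.mem_singleton] at this
            exact hzy this
          rw [hky, hk]
          simp only
          rw [if_neg (fun h => hzX h.1), if_neg hzy]
          split_ifs <;> omega
      have sep2 : Separates π X' Y' := by
        refine ⟨y', hy', fun x hx hxy => ?_, fun z hz hzy' => ?_⟩
        · apply hπ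
          rw [hky', hk]
          simp only
          split_ifs with h1 h2 h3
          · omega
          · omega
          · omega
          · exact absurd ⟨hx, hxy⟩ h3
        · apply hπ
          have hzX : z ∉ X := by
            intro hzX
            have : z ∈ X ∩ Y' := Finset.mem_inter.mpr ⟨hzX, hz⟩
            rw [hXY'empty] at this
            exact absurd this (Finset.notMem_empty z)
          have hzy : z ≠ y := fun h => hyY' (h ▸ hz)
          have hzX' : z ∉ X' := by
            intro hzX'
            have : z ∈ X' ∩ Y' := Finset.mem_inter.mpr ⟨hzX', hz⟩
            rw [hy', Finset.mem_singleton] at this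
            exact hzy' this
          rw [hky', hk]
          simp only
          rw [if_neg (fun h => hzX h.1), if_neg hzy,
            if_neg (fun h => hzX' h.1), if_neg hzy']
          omega
      obtain ⟨h1, h2⟩ := hsep π X hXE Y hYE X' hX'E Y' hY'E hcard hcard' sep1 sep2
      exact hne (Prod.ext h1 h2)
end
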